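/- Let V = h ⊕ m be a direct sum of finite-dimensional vector spaces, with bases {h_1,...,h_l} of h and {e_1,...,e_m} of m. Let r = Σ a^{ij} h_i∧h_j + Σ_i h_i∧x^i + Σ c^{ij} e_i∧e_j ∈ ∧²V with x^i ∈ m and a, c skew-symmetric matrices. Suppose I ⊆ {1,...,l} is such that for every i₀ ∈ I, x^{i₀} ∈ Span{Σ_j c^{ij} e_j : i = 1,...,m}. Then there is a new complement m̃ of h in V with basis {ẽ_1,...,ẽ_m} such that r = Σ ã^{ij} h_i∧h_j + Σ_{i∉I} h_i∧x^i + Σ c^{ij} ẽ_i∧ẽ_j for some skew-symmetric matrix ã. -/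
import Mathlib

open ExteriorAlgebra

/-- The wedge `x ∧ y` of two vectors, inside the exterior algebra. -/
noncomputable def wdg {V : Type} [AddCommGroup V] [Module ℝ V] (x y : V) :
    ExteriorAlgebra ℝ V :=
  ExteriorAlgebra.ι ℝ x * ExteriorAlgebra.ι ℝ y

namespace BasisChangeAux

variable {V : Type} [AddCommGroup V] [Module ℝ V]

noncomputable def W : V →ₗ[ℝ] V →ₗ[ℝ] ExteriorAlgebra ℝ V :=
  (LinearMap.mul ℝ (ExteriorAlgebra ℝ V)).compl₁₂ (ι ℝ) (ι ℝ)

lemma wdg_eq (x y : V) : wdg x y = W x y := rfl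

lemma W_anticomm (x y : V) : W x y = - W y x := by
  have h := ExteriorAlgebra.ι_add_mul_swap (R := ℝ) x y
  show (ι ℝ x : ExteriorAlgebra ℝ V) * ι ℝ y = -(ι ℝ y * ι ℝ x)
  exact eq_neg_of_add_eq_zero_left h

lemma sum4_comm {α β M : Type*} [Fintype α] [Fintype β] [AddCommMonoid M]
    (f : α → α → β → β → M) :
    ∑ p, ∑ q, ∑ i, ∑ j, f p q i j = ∑ i, ∑ j, ∑ p, ∑ q, f p q i j := by
  calc ∑ p, ∑ q, ∑ i, ∑ j, f p q i j
      = ∑ p, ∑ i, ∑ q, ∑ j, f p q i j :=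
        Finset.sum_congr rfl fun p _ => Finset.sum_comm
    _ = ∑ i, ∑ p, ∑ q, ∑ j, f p q i j := Finset.sum_comm
    _ = ∑ i, ∑ p, ∑ j, ∑ q, f p q i j :=
        Finset.sum_congr rfl fun i _ => Finset.sum_congr rfl fun p _ => Finset.sum_comm
    _ = ∑ i, ∑ j, ∑ p, ∑ q, f p q i j :=
        Finset.sum_congr rfl fun i _ => Finset.sum_comm

lemma W_sum_right {β : Type*} [Fintype β] (z : V) (v : β → V) (w : β → ℝ) :
    W z (∑ q, w q • v q) = ∑ q, w q • W z (v q) := by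
  simp only [map_sum, map_smul]

lemma W_sum_left {α : Type*} [Fintype α] (u : α → V) (s : α → ℝ) (z : V) :
    W (∑ p, s p • u p) z = ∑ p, s p • W (u p) z := by
  simp only [map_sum, map_smul, LinearMap.sum_apply, LinearMap.smul_apply]

lemma W_sum_sum {α β : Type*} [Fintype α] [Fintype β] (u : α → V) (v : β → V)
    (s : α → ℝ) (w : β → ℝ) :
    W (∑ p, s p • u p) (∑ q, w q • v q) = ∑ p, ∑ q, (s p * w q) • W (u p) (v q) := by
  rw [W_sum_left]
  exact Finset.sum_congr rfl fun p _ => by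
    rw [W_sum_right, Finset.smul_sum]
    exact Finset.sum_congr rfl fun q _ => by rw [smul_smul]

end BasisChangeAux

open BasisChangeAux

/-- Let `V = h ⊕ m` with bases `{h₁,…,h_l}` of `h` and
`{e₁,…,e_m}` of `m`, and let
`r = Σ a^{ij} hᵢ∧hⱼ + Σᵢ hᵢ∧xⁱ + Σ c^{ij} eᵢ∧eⱼ ∈ ∧²V` with `xⁱ ∈ m` and
`a, c` skew-symmetric.  If for every `i₀ ∈ I` one has
`x^{i₀} ∈ Span{Σⱼ c^{ij} eⱼ : i}`, then there is a new complement `m̃` of `h`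
with basis `{ẽ₁,…,ẽ_m}` (with `ẽᵢ - eᵢ ∈ h`) such that
`r = Σ ã^{ij} hᵢ∧hⱼ + Σ_{i∉I} hᵢ∧xⁱ + Σ c^{ij} ẽᵢ∧ẽⱼ` for some skew `ã`. -/
theorem basis_change_removes_mixed_terms
    {V : Type} [AddCommGroup V] [Module ℝ V] {l m : ℕ}
    (hb : Fin l → V) (eb : Fin m → V)
    (hcompl : IsCompl (Submodule.span ℝ (Set.range hb))
      (Submodule.span ℝ (Set.range eb)))
    (hindh : LinearIndependent ℝ hb) (hinde : LinearIndependent ℝ eb)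
    (a : Fin l → Fin l → ℝ) (ha : ∀ i j, a j i = - a i j)
    (x : Fin l → V) (hx : ∀ i, x i ∈ Submodule.span ℝ (Set.range eb))
    (c : Fin m → Fin m → ℝ) (hc : ∀ i j, c j i = - c i j)
    (r : ExteriorAlgebra ℝ V)
    (hr : r = (∑ i, ∑ j, a i j • wdg (hb i) (hb j))
        + (∑ i, wdg (hb i) (x i))
        + ∑ i, ∑ j, c i j • wdg (eb i) (eb j))
    (I : Finset (Fin l))
    (hI : ∀ i₀ ∈ I, x i₀ ∈
      Submodule.span ℝ (Set.range fun k => ∑ j, c k j • eb j)) :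
    ∃ (et : Fin m → V) (ta : Fin l → Fin l → ℝ),
      (∀ i, et i - eb i ∈ Submodule.span ℝ (Set.range hb)) ∧
      (∀ i j, ta j i = - ta i j) ∧
      LinearIndependent ℝ et ∧
      IsCompl (Submodule.span ℝ (Set.range hb))
        (Submodule.span ℝ (Set.range et)) ∧
      r = (∑ i, ∑ j, ta i j • wdg (hb i) (hb j))
        + (∑ i ∈ Finset.univ \ I, wdg (hb i) (x i))
        + ∑ i, ∑ j, c i j • wdg (et i) (et j) := by
  classical
  set y : Fin m → V := fun k => ∑ j, c k j • eb j with hy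
  have ht : ∃ t : Fin l → Fin m → ℝ,
      (∀ p ∈ I, ∑ k, t p k • y k = x p) ∧ (∀ p ∉ I, t p = 0) := by
    choose f hf using fun p (hp : p ∈ I) =>
      (Submodule.mem_span_range_iff_exists_fun ℝ).mp (hI p hp)
    exact ⟨fun p => if hp : p ∈ I then f p hp else 0,
      fun p hp => by simp only [dif_pos hp]; exact hf p hp,
      fun p hp => by simp [dif_neg hp]⟩
  obtain ⟨t, ht1, ht2⟩ := ht
  set d : Fin m → V := fun k => ∑ p, ((1/2 : ℝ) * t p k) • hb p with hd
  set et : Fin m → V := fun k => eb k + d k with het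
  set ta : Fin l → Fin l → ℝ :=
    fun p q => a p q - (1/4 : ℝ) * ∑ i, ∑ j, c i j * t p i * t q j with hta
  have hdh : ∀ k, d k ∈ Submodule.span ℝ (Set.range hb) := fun k =>
    Submodule.sum_mem _ fun p _ =>
      Submodule.smul_mem _ _ (Submodule.subset_span ⟨p, rfl⟩)
  -- key linear-independence fact
  have hkey : ∀ g : Fin m → ℝ,
      (∑ k, g k • et k) ∈ Submodule.span ℝ (Set.range hb) → ∀ k, g k = 0 := by
    intro g hg
    have h2 : (∑ k, g k • d k) ∈ Submodule.span ℝ (Set.range hb) :=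
      Submodule.sum_mem _ fun k _ => Submodule.smul_mem _ _ (hdh k)
    have heq : ∑ k, g k • eb k = (∑ k, g k • et k) - ∑ k, g k • d k := by
      rw [← Finset.sum_sub_distrib]
      exact Finset.sum_congr rfl fun k _ => by rw [het]; simp [smul_add]
    have h1 : (∑ k, g k • eb k) ∈ Submodule.span ℝ (Set.range hb) := by
      rw [heq]; exact Submodule.sub_mem _ hg h2
    have h3 : (∑ k, g k • eb k) ∈ Submodule.span ℝ (Set.range eb) :=
      Submodule.sum_mem _ fun k _ =>
        Submodule.smul_mem _ _ (Submodule.subset_span ⟨k, rfl⟩)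
    have h0 : ∑ k, g k • eb k = 0 :=
      Submodule.disjoint_def.mp hcompl.disjoint _ h1 h3
    exact Fintype.linearIndependent_iff.mp hinde g h0
  have hind : LinearIndependent ℝ et :=
    Fintype.linearIndependent_iff.mpr fun g hg =>
      hkey g (by rw [hg]; exact Submodule.zero_mem _)
  have hcompl' : IsCompl (Submodule.span ℝ (Set.range hb))
      (Submodule.span ℝ (Set.range et)) := by
    constructor
    · rw [Submodule.disjoint_def]
      intro v hv1 hv2
      obtain ⟨g, hgv⟩ := (Submodule.mem_span_range_iff_exists_fun ℝ).mp hv2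
      have hz := hkey g (by rw [hgv]; exact hv1)
      rw [← hgv]
      simp [hz]
    · rw [codisjoint_iff, eq_top_iff, ← hcompl.sup_eq_top]
      refine sup_le le_sup_left ?_
      rw [Submodule.span_le]
      rintro _ ⟨k, rfl⟩
      have hk : eb k = et k - d k := by
        simp only [het]; rw [add_sub_cancel_right]
      rw [hk]
      exact Submodule.sub_mem _
        (Submodule.mem_sup_right (Submodule.subset_span ⟨k, rfl⟩))
        (Submodule.mem_sup_left (hdh k))
  refine ⟨et, ta, fun i => by rw [het]; simpa using hdh i, ?_, hind, hcompl', ?_⟩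
  · -- skewness of ta
    intro p q
    have hswap : (∑ i, ∑ j, c i j * t q i * t p j)
        = ∑ i, ∑ j, - (c i j * t p i * t q j) := by
      rw [Finset.sum_comm]
      exact Finset.sum_congr rfl fun i _ => Finset.sum_congr rfl fun j _ => by
        rw [hc]; ring
    simp only [hta, ha p q, hswap, Finset.sum_neg_distrib]
    ring
  -- main algebraic identity
  have hexp : ∀ i j, wdg (et i) (et j)
      = wdg (eb i) (eb j) + (W (eb i) (d j) + W (d i) (eb j)) + W (d i) (d j) := by
    intro i j
    simp only [wdg_eq, het, map_add, LinearMap.add_apply]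
    abel
  have hsplit : ∑ i, ∑ j, c i j • wdg (et i) (et j)
      = (∑ i, ∑ j, c i j • wdg (eb i) (eb j))
        + (∑ i, ∑ j, (c i j • W (eb i) (d j) + c i j • W (d i) (eb j)))
        + (∑ i, ∑ j, c i j • W (d i) (d j)) := by
    simp only [hexp, smul_add, Finset.sum_add_distrib]
  have h1 : ∑ i, ∑ j, c i j • W (eb i) (d j)
      = ∑ i, ∑ j, c i j • W (d i) (eb j) := by
    rw [Finset.sum_comm]
    exact Finset.sum_congr rfl fun i _ => Finset.sum_congr rfl fun j _ => by
      rw [hc, W_anticomm (eb j) (d i)]; simp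
  have einner : ∀ i, ∑ j, c i j • W (d i) (eb j) = W (d i) (y i) := by
    intro i
    simp only [hy]
    exact (W_sum_right (d i) eb (c i)).symm
  have h2d : ∀ i, (2:ℝ) • d i = ∑ p, t p i • hb p := by
    intro i
    simp only [hd]
    rw [Finset.smul_sum]
    exact Finset.sum_congr rfl fun p _ => by rw [smul_smul]; congr 1; ring
  have e2 : ∀ i, (2:ℝ) • W (d i) (y i) = ∑ p, t p i • W (hb p) (y i) := by
    intro i
    rw [← LinearMap.smul_apply, ← map_smul, h2d i, W_sum_left]
  have hcross : (∑ i, ∑ j, (c i j • W (eb i) (d j) + c i j • W (d i) (eb j)))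
      = ∑ p ∈ I, wdg (hb p) (x p) := by
    calc ∑ i, ∑ j, (c i j • W (eb i) (d j) + c i j • W (d i) (eb j))
        = (∑ i, ∑ j, c i j • W (eb i) (d j)) + ∑ i, ∑ j, c i j • W (d i) (eb j) := by
          simp only [Finset.sum_add_distrib]
      _ = (2:ℝ) • ∑ i, ∑ j, c i j • W (d i) (eb j) := by
          rw [h1, two_smul]
      _ = ∑ i, (2:ℝ) • W (d i) (y i) := by
          rw [Finset.smul_sum]
          exact Finset.sum_congr rfl fun i _ => by rw [einner i]
      _ = ∑ i, ∑ p, t p i • W (hb p) (y i) := Finset.sum_congr rfl fun i _ => e2 i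
      _ = ∑ p, W (hb p) (∑ i, t p i • y i) := by
          rw [Finset.sum_comm]
          exact Finset.sum_congr rfl fun p _ =>
            (W_sum_right (hb p) y fun i => t p i).symm
      _ = ∑ p ∈ I, W (hb p) (∑ i, t p i • y i) := by
          rw [← Finset.sum_subset (Finset.subset_univ I)
            (fun p _ hp => by simp [ht2 p hp])]
      _ = ∑ p ∈ I, wdg (hb p) (x p) :=
          Finset.sum_congr rfl fun p hp => by rw [ht1 p hp, wdg_eq]
  have hD : ∑ i, ∑ j, c i j • W (d i) (d j)
      = ∑ p, ∑ q, ((1/4 : ℝ) * ∑ i, ∑ j, c i j * t p i * t q j) • wdg (hb p) (hb q) := by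
    have hWd : ∀ i j, W (d i) (d j)
        = ∑ p, ∑ q, (((1/2 : ℝ) * t p i) * ((1/2 : ℝ) * t q j)) • W (hb p) (hb q) := by
      intro i j
      simp only [hd]
      exact W_sum_sum hb hb (fun p => (1/2 : ℝ) * t p i) (fun q => (1/2 : ℝ) * t q j)
    have hR : ∑ p, ∑ q, ((1/4 : ℝ) * ∑ i, ∑ j, c i j * t p i * t q j) • wdg (hb p) (hb q)
        = ∑ p, ∑ q, ∑ i, ∑ j, ((1/4 : ℝ) * (c i j * t p i * t q j)) • W (hb p) (hb q) := by
      simp only [wdg_eq, Finset.mul_sum, Finset.sum_smul]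
    rw [hR, sum4_comm]
    refine Finset.sum_congr rfl fun i _ => Finset.sum_congr rfl fun j _ => ?_
    rw [hWd i j, Finset.smul_sum]
    refine Finset.sum_congr rfl fun p _ => ?_
    rw [Finset.smul_sum]
    refine Finset.sum_congr rfl fun q _ => ?_
    rw [smul_smul]
    congr 1
    ring
  have hA : ∑ i, ∑ j, ta i j • wdg (hb i) (hb j)
      = (∑ i, ∑ j, a i j • wdg (hb i) (hb j))
        - ∑ p, ∑ q, ((1/4 : ℝ) * ∑ i, ∑ j, c i j * t p i * t q j) • wdg (hb p) (hb q) := by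
    rw [← Finset.sum_sub_distrib]
    refine Finset.sum_congr rfl fun p _ => ?_
    rw [← Finset.sum_sub_distrib]
    exact Finset.sum_congr rfl fun q _ => by rw [hta, sub_smul]
  have hB : (∑ i, wdg (hb i) (x i))
      = (∑ i ∈ Finset.univ \ I, wdg (hb i) (x i)) + ∑ p ∈ I, wdg (hb p) (x p) :=
    (Finset.sum_sdiff (Finset.subset_univ I)).symm
  rw [hr, hsplit, hcross, hD, hA, hB]
  abel
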